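/- On any affine space A over F and any ζ ∈ F, the bracket [x,y] := ζ ▷_x y defines a Lie affgebra structure on A. -/

import Mathlib

structure AffSp (F : Type*) [Field F] (A : Type*) where
  t : A → A → A → A
  act : F → A → A → A
  t_assoc : ∀ a b c d e : A, t (t a b c) d e = t a b (t c d e)
  t_malcev : ∀ a b : A, t a a b = b
  t_symm : ∀ a b c : A, t a b c = t c b a
  act_heap1 : ∀ (l m n : F) (a b : A),
    act (l - m + n) a b = t (act l a b) (act m a b) (act n a b)
  act_heap2 : ∀ (l : F) (a b c d : A),
    act l a (t b c d) = t (act l a b) (act l a c) (act l a d)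
  act_mul : ∀ (l m : F) (a b : A), act (l * m) a b = act l a (act m a b)
  act_one : ∀ a b : A, act 1 a b = b
  act_zero : ∀ a b : A, act 0 a b = a
  base_change : ∀ (l : F) (a b c : A), act l a b = t (act l c b) (act l c a) a

namespace AffSp

variable {F A : Type*} [Field F] (S : AffSp F A)

lemma act_self (l : F) (a : A) : S.act l a a = a := by
  have h : S.act (l * 0) a a = S.act l a (S.act 0 a a) := S.act_mul l 0 a a
  rw [S.act_zero] at h
  simpa [S.act_zero] using h.symm

/-- Type synonym for `A` based at `o`. -/
def Model (S : AffSp F A) (_o : A) : Type _ := A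

variable (o : A)

instance : Zero (Model S o) := ⟨o⟩
instance : Add (Model S o) := ⟨fun a b => S.t a o b⟩
instance : Neg (Model S o) := ⟨fun a => S.t o a o⟩

instance : AddCommGroup (Model S o) where
  add_assoc a b c := S.t_assoc a o b o c
  zero_add a := S.t_malcev o a
  add_zero a := by show S.t a o o = a; erw [S.t_symm, S.t_malcev]
  add_comm a b := by show S.t a o b = S.t b o a; erw [S.t_symm]
  neg_add_cancel a := by
    show S.t (S.t o a o) o a = o
    erw [S.t_assoc, S.t_malcev, S.t_symm, S.t_malcev]
  nsmul := nsmulRec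
  zsmul := zsmulRec
  nsmul_zero _ := rfl
  nsmul_succ _ _ := rfl
  zsmul_zero' _ := rfl
  zsmul_succ' _ _ := rfl
  zsmul_neg' _ _ := rfl

lemma add_def (a b : Model S o) : a + b = S.t a o b := rfl
lemma zero_def : (0 : Model S o) = o := rfl
lemma neg_def (a : Model S o) : -a = S.t o a o := rfl

instance : Module F (Model S o) where
  smul l a := S.act l o a
  one_smul a := S.act_one o a
  mul_smul l m a := S.act_mul l m o a
  smul_zero l := S.act_self l o
  smul_add l a b := by
    show S.act l o (S.t a o b) = S.t (S.act l o a) o (S.act l o b)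
    erw [S.act_heap2, S.act_self]
  add_smul l m a := by
    show S.act (l + m) o a = S.t (S.act l o a) o (S.act m o a)
    have : l + m = l - 0 + m := by ring
    erw [this, S.act_heap1, S.act_zero]
  zero_smul a := S.act_zero o a

lemma smul_def (l : F) (a : Model S o) : l • a = S.act l o a := rfl

lemma t_eq (a b c : Model S o) : S.t a b c = a - b + c := by
  show S.t a b c = S.t (S.t a o (S.t o b o)) o c
  erw [S.t_assoc, S.t_assoc, S.t_malcev, ← S.t_assoc, S.t_symm a o o, S.t_malcev]

lemma act_eq (l : F) (a b : Model S o) : S.act l a b = l • b - l • a + a := by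
  erw [S.base_change l a b o, t_eq S o]; rfl

lemma br1 (ζ : F) (a b c x : Model S o) :
    S.act ζ (S.t a b c) x = S.t (S.act ζ a x) (S.act ζ b x) (S.act ζ c x) := by
  show ((_ : Model S o) = _); simp only [t_eq, act_eq]; module

lemma br2 (ζ l : F) (a b x : Model S o) :
    S.act ζ (S.act l a b) x = S.act l (S.act ζ a x) (S.act ζ b x) := by
  show ((_ : Model S o) = _); simp only [t_eq, act_eq]; module

lemma br3 (ζ : F) (x a b c : Model S o) :
    S.act ζ x (S.t a b c) = S.t (S.act ζ x a) (S.act ζ x b) (S.act ζ x c) := by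
  show ((_ : Model S o) = _); simp only [t_eq, act_eq]; module

lemma br4 (ζ l : F) (x a b : Model S o) :
    S.act ζ x (S.act l a b) = S.act l (S.act ζ x a) (S.act ζ x b) := by
  show ((_ : Model S o) = _); simp only [t_eq, act_eq]; module

lemma anti (ζ : F) (a b : Model S o) :
    S.t (S.act ζ a b) (S.act ζ a a) (S.act ζ b a) = S.act ζ b b := by
  show ((_ : Model S o) = _); simp only [t_eq, act_eq]; module

lemma jacobi (ζ : F) (a b c : Model S o) :
    S.t (S.act ζ a (S.act ζ b c)) (S.act ζ a a)
      (S.t (S.act ζ b (S.act ζ c a)) (S.act ζ b b) (S.act ζ c (S.act ζ a b))) =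
    S.act ζ c c := by
  show ((_ : Model S o) = _); simp only [t_eq, act_eq]; module

end AffSp

/-- On any intrinsic affine space `A` over `F` and for any `ζ ∈ F`, the
bracket `[x,y] := ζ ▷_x y` defines a Lie affgebra structure on `A`:
it is bi-affine and satisfies the affine antisymmetry and Jacobi identities. -/
theorem zeta_bracket_is_lie_affgebra
    {F A : Type*} [Field F] (S : AffSp F A) (ζ : F) :
    let br : A → A → A := fun x y => S.act ζ x y
    -- bi-affine
    (∀ a b c x : A, br (S.t a b c) x = S.t (br a x) (br b x) (br c x)) ∧
    (∀ (l : F) (a b x : A), br (S.act l a b) x = S.act l (br a x) (br b x)) ∧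
    (∀ x a b c : A, br x (S.t a b c) = S.t (br x a) (br x b) (br x c)) ∧
    (∀ (l : F) (x a b : A), br x (S.act l a b) = S.act l (br x a) (br x b)) ∧
    -- affine antisymmetry
    (∀ a b : A, S.t (br a b) (br a a) (br b a) = br b b) ∧
    -- affine Jacobi identity
    (∀ a b c : A,
      S.t (br a (br b c)) (br a a) (S.t (br b (br c a)) (br b b) (br c (br a b))) = br c c) := by
  intro br
  refine ⟨fun a b c x => S.br1 a ζ a b c x,
          fun l a b x => S.br2 a ζ l a b x,
          fun x a b c => S.br3 x ζ x a b c,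
          fun l x a b => S.br4 x ζ l x a b,
          fun a b => S.anti a ζ a b,
          fun a b c => S.jacobi a ζ a b c⟩
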